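/- For the minority rule, finality is preserved: if the triple (E_t(i-1), E_t(i), E_t(i+1)) is not 101 or 010, then the triple (E_{t+1}(i-1), E_{t+1}(i), E_{t+1}(i+1)) is also not 101 or 010. -/

import Mathlib

/-!
Over bits, a neighbourhood `x y z` is final exactly when it contains two equal adjacent bits.
The minority of a triple containing a repeated bit `b` is `1 - b`, whatever the third bit is,
so a repeated pair `E_t(j) = E_t(j+1)` inside the neighbourhood of `i` is mapped to the
repeated pair `E_{t+1}(j) = E_{t+1}(j+1)`.
-/

/-- The minority rule on bits. -/
def mino (a b c : Fin 2) : Fin 2 := if a.val + b.val + c.val ≤ 1 then 1 else 0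

/-- A location `i` is final at configuration `σ` if its neighborhood pattern
is not 101 nor 010. -/
def MinFinal {n : ℕ} (σ : ZMod n → Fin 2) (i : ZMod n) : Prop :=
  ¬((σ (i - 1), σ i, σ (i + 1)) = ((1 : Fin 2), (0 : Fin 2), (1 : Fin 2)) ∨
    (σ (i - 1), σ i, σ (i + 1)) = ((0 : Fin 2), (1 : Fin 2), (0 : Fin 2)))

@[simp]
theorem mino_self_left (b c : Fin 2) : mino b b c = 1 - b := by
  revert b c; decide

@[simp]
theorem mino_self_right (a b : Fin 2) : mino a b b = 1 - b := by
  revert a b; decide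

theorem minFinal_iff {n : ℕ} (σ : ZMod n → Fin 2) (i : ZMod n) :
    MinFinal σ i ↔ σ (i - 1) = σ i ∨ σ i = σ (i + 1) := by
  unfold MinFinal
  generalize σ (i - 1) = a, σ i = b, σ (i + 1) = c
  revert a b c; decide

theorem mino_finality_preserved_general (n : ℕ)
    (E : ℕ → ZMod n → Fin 2)
    (hE : ∀ t (i : ZMod n),
      E (t + 1) i = mino (E t (i - 1)) (E t i) (E t (i + 1)))
    (t : ℕ) (i : ZMod n) (h : MinFinal (E t) i) :
    MinFinal (E (t + 1)) i := by
  rw [minFinal_iff] at h ⊢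
  rcases h with h | h
  · left
    simp only [hE, sub_add_cancel, h, mino_self_left, mino_self_right]
  · right
    simp only [hE, add_sub_cancel_right, h, mino_self_left, mino_self_right]

theorem mino_finality_preserved (n : ℕ) (hn : 5 ≤ n)
    (E : ℕ → ZMod n → Fin 2)
    (hE : ∀ t (i : ZMod n),
      E (t + 1) i = mino (E t (i - 1)) (E t i) (E t (i + 1)))
    (t : ℕ) (i : ZMod n) (h : MinFinal (E t) i) :
    MinFinal (E (t + 1)) i :=
  mino_finality_preserved_general n E hE t i h
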